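/- arXiv:math/0702311 — 2 statements merged into one kernel-verified Lean document; each statement's English description precedes it below -/
import Mathlib

section
/- The metric g^c₃ has no closed causal geodesic: for every c > 0, every p ∈ ℝ³, every v ∈ ℝ³ with v ≠ 0 and vᵀ·G^c(p)·v ≤ 0, and every twice differentiable γ : ℝ → ℝ³ solving the geodesic equation of g^c₃ with γ(0) = p, γ'(0) = v, there is no T > 0 with γ(T) = p and γ'(T) = v. -/
open Matrix

/-- A curve `γ = (γ₀,γ₁,γ₂) : ℝ → ℝ³` solves the geodesic equation of the
Lorentzian metric `g^c₃` iff it is twice differentiable and satisfies the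
geodesic ODE computed from the Christoffel symbols of `g^c₃`. -/
def SolvesGeodesic (c : ℝ) (γ₀ γ₁ γ₂ : ℝ → ℝ) : Prop :=
  Differentiable ℝ γ₀ ∧ Differentiable ℝ (deriv γ₀) ∧
  Differentiable ℝ γ₁ ∧ Differentiable ℝ (deriv γ₁) ∧
  Differentiable ℝ γ₂ ∧ Differentiable ℝ (deriv γ₂) ∧
  ∀ t : ℝ,
    deriv (deriv γ₀) t =
      -c^2 * γ₂ t * deriv γ₀ t * deriv γ₂ t
        - (1 + c^2 * (γ₂ t)^2) * deriv γ₁ t * deriv γ₂ t ∧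
    deriv (deriv γ₁) t =
      c^2 * deriv γ₀ t * deriv γ₂ t + c^2 * γ₂ t * deriv γ₁ t * deriv γ₂ t ∧
    deriv (deriv γ₂) t =
      -c^2 * deriv γ₀ t * deriv γ₁ t - c^2 * γ₂ t * (deriv γ₁ t)^2

/-- The matrix representing the Lorentzian metric `g^c₃` at a point with third
coordinate `x₂`. -/
noncomputable def Gc3 (c x₂ : ℝ) : Matrix (Fin 3) (Fin 3) ℝ :=
  !![-c^2, -c^2 * x₂, 0;
     -c^2 * x₂, 1 - c^2 * x₂^2, 0;
     0, 0, 1]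

set_option maxHeartbeats 1000000 in
/-- `g^c₃` has no closed causal geodesic. -/
theorem stmt_5 (c : ℝ) (hc : 0 < c) (p v : Fin 3 → ℝ) (hv : v ≠ 0)
    (hcausal : v ⬝ᵥ (Gc3 c (p 2)).mulVec v ≤ 0)
    (γ₀ γ₁ γ₂ : ℝ → ℝ) (hgeo : SolvesGeodesic c γ₀ γ₁ γ₂)
    (hp : γ₀ 0 = p 0 ∧ γ₁ 0 = p 1 ∧ γ₂ 0 = p 2)
    (hV : deriv γ₀ 0 = v 0 ∧ deriv γ₁ 0 = v 1 ∧ deriv γ₂ 0 = v 2) :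
    ¬ ∃ T > (0 : ℝ),
        γ₀ T = p 0 ∧ γ₁ T = p 1 ∧ γ₂ T = p 2 ∧
        deriv γ₀ T = v 0 ∧ deriv γ₁ T = v 1 ∧ deriv γ₂ T = v 2 := by
  obtain ⟨hd0, hd0', hd1, hd1', hd2, hd2', hode⟩ := hgeo
  obtain ⟨hp0, hp1, hp2⟩ := hp
  obtain ⟨hV0, hV1, hV2⟩ := hV
  -- causality, expanded
  have hq : -c^2*(v 0 + p 2 * v 1)^2 + (v 1)^2 + (v 2)^2 ≤ 0 := by
    simp [Gc3, Matrix.mulVec, dotProduct, Fin.sum_univ_three] at hcausal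
    nlinarith [hcausal]
  set E0 : ℝ := v 0 + p 2 * v 1 with hE0def
  -- conserved quantity E = γ₀' + γ₂ γ₁'
  have hE : ∀ t : ℝ, HasDerivAt (fun t => deriv γ₀ t + γ₂ t * deriv γ₁ t) 0 t := by
    intro t
    have h := ((hd0' t).hasDerivAt).add (((hd2 t).hasDerivAt).mul ((hd1' t).hasDerivAt))
    refine h.congr_deriv ?_
    obtain ⟨e0, e1, _⟩ := hode t
    rw [e0, e1]; ring
  have hEc : ∀ t : ℝ, deriv γ₀ t + γ₂ t * deriv γ₁ t = E0 := by
    intro t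
    have h := is_const_of_deriv_eq_zero (f := fun t => deriv γ₀ t + γ₂ t * deriv γ₁ t)
      (fun s => (hE s).differentiableAt) (fun s => (hE s).deriv) t 0
    rw [h, hV0, hV1, hp2]
  -- conserved quantity K = (γ₁')² + (γ₂')²
  have hK : ∀ t : ℝ, HasDerivAt (fun t => (deriv γ₁ t)^2 + (deriv γ₂ t)^2) 0 t := by
    intro t
    have h := (((hd1' t).hasDerivAt).pow 2).add (((hd2' t).hasDerivAt).pow 2)
    refine h.congr_deriv ?_
    obtain ⟨_, e1, e2⟩ := hode t
    rw [e1, e2]; push_cast; ring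
  have hKc : ∀ t : ℝ, (deriv γ₁ t)^2 + (deriv γ₂ t)^2 = (v 1)^2 + (v 2)^2 := by
    intro t
    have h := is_const_of_deriv_eq_zero (f := fun t => (deriv γ₁ t)^2 + (deriv γ₂ t)^2)
      (fun s => (hK s).differentiableAt) (fun s => (hK s).deriv) t 0
    rw [h, hV1, hV2]
  by_cases hE0 : E0 = 0
  · -- then v = 0, contradiction
    intro _
    apply hv
    have h12 : v 1 ^ 2 + v 2 ^ 2 ≤ 0 := by
      have h := hq; rw [hE0] at h; nlinarith [h]
    have h1 : v 1 = 0 := by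
      have : v 1 ^ 2 = 0 := le_antisymm (by nlinarith [sq_nonneg (v 2)]) (sq_nonneg _)
      exact pow_eq_zero_iff two_ne_zero |>.mp this
    have h2 : v 2 = 0 := by
      have : v 2 ^ 2 = 0 := le_antisymm (by nlinarith [sq_nonneg (v 1)]) (sq_nonneg _)
      exact pow_eq_zero_iff two_ne_zero |>.mp this
    have h0 : v 0 = 0 := by rw [hE0def] at hE0; rw [h1] at hE0; linarith
    funext i
    fin_cases i <;> simp only [Pi.zero_apply] <;> assumption
  · rintro ⟨T, hT, hcl0, _, hcl2, _, _, hcv2⟩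
    -- monotone function G
    set G : ℝ → ℝ := fun t => c^2 * E0 * γ₀ t - γ₂ t * deriv γ₂ t with hGdef
    have hG : ∀ t : ℝ, HasDerivAt G (c^2 * E0^2 - (deriv γ₂ t)^2) t := by
      intro t
      have h := (((hd0 t).hasDerivAt).const_mul (c^2 * E0)).sub
        (((hd2 t).hasDerivAt).mul ((hd2' t).hasDerivAt))
      refine h.congr_deriv ?_
      obtain ⟨_, _, e2⟩ := hode t
      have he := hEc t
      rw [e2, ← he]
      ring
    have hKle : (v 1)^2 + (v 2)^2 ≤ c^2 * E0^2 := by nlinarith [hq]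
    have hmono : Monotone G := by
      apply monotone_of_deriv_nonneg (fun s => (hG s).differentiableAt)
      intro s
      rw [(hG s).deriv]
      have := hKc s
      nlinarith [sq_nonneg (deriv γ₁ s)]
    have hGT : G T = G 0 := by
      simp only [hGdef]
      rw [hcl0, hcl2, hcv2, hp0, hp2, hV2]
    -- G is constant on [0, T]
    have hGconst : ∀ t ∈ Set.Icc (0:ℝ) T, G t = G 0 := by
      intro t ht
      have h1 := hmono ht.1
      have h2 := hmono ht.2
      rw [hGT] at h2
      linarith
    -- hence its derivative vanishes on (0,T), so z² = c²E0² and w = 0 there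
    have hzw : ∀ t ∈ Set.Ioo (0:ℝ) T, (deriv γ₂ t)^2 = c^2 * E0^2 ∧ deriv γ₁ t = 0 := by
      intro t ht
      have hev : (fun s => G s) =ᶠ[nhds t] (fun _ => G 0) := by
        filter_upwards [Ioo_mem_nhds ht.1 ht.2] with s hs
        exact hGconst s ⟨le_of_lt hs.1, le_of_lt hs.2⟩
      have hd0' : deriv G t = 0 := by
        rw [Filter.EventuallyEq.deriv_eq hev, deriv_const]
      rw [(hG t).deriv] at hd0'
      have hz2 : (deriv γ₂ t)^2 = c^2 * E0^2 := by linarith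
      refine ⟨hz2, ?_⟩
      have hk := hKc t
      have : (deriv γ₁ t)^2 ≤ 0 := by nlinarith
      nlinarith [sq_nonneg (deriv γ₁ t)]
    -- evaluate at T/2
    have htmid : T/2 ∈ Set.Ioo (0:ℝ) T := ⟨by linarith, by linarith⟩
    obtain ⟨hz2, _⟩ := hzw (T/2) htmid
    -- γ₁' vanishes near T/2, so its derivative at T/2 is 0
    have hwev : (fun s => deriv γ₁ s) =ᶠ[nhds (T/2)] (fun _ => (0:ℝ)) := by
      filter_upwards [Ioo_mem_nhds htmid.1 htmid.2] with s hs
      exact (hzw s hs).2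
    have hw' : deriv (deriv γ₁) (T/2) = 0 := by
      rw [Filter.EventuallyEq.deriv_eq hwev, deriv_const]
    obtain ⟨_, e1, _⟩ := hode (T/2)
    rw [hw'] at e1
    have hw0 : deriv γ₁ (T/2) = 0 := (hzw (T/2) htmid).2
    have hu : deriv γ₀ (T/2) = E0 := by have := hEc (T/2); rw [hw0] at this; linarith
    rw [hw0, hu] at e1
    -- 0 = c² E0 z, so z(T/2) = 0, contradicting z² = c²E0² > 0
    have hcE : c^2 * E0 ≠ 0 := by positivity
    have hz0 : deriv γ₂ (T/2) = 0 := by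
      have : c^2 * E0 * deriv γ₂ (T/2) = 0 := by linarith [e1]
      exact (mul_eq_zero.mp this).resolve_left hcE
    rw [hz0] at hz2
    have hpos : 0 < c^2 * E0^2 := by positivity
    nlinarith [hz2, hpos]
end

section
/- Through every point of (ℝ³, g^c₃) there is a 1-parameter family of closed spacelike geodesics: for every c > 0, every p ∈ ℝ³, and every v₁ ∈ ℝ with q(v₁) := 2c²·(1 + p₂·v₁)² − v₁² ≥ 0, the vector v := (1, v₁, √(q(v₁))) satisfies vᵀ·G^c(p)·v > 0 (v is g^c₃-spacelike), and every twice differentiable solution γ : ℝ → ℝ³ of the geodesic equation of g^c₃ with γ(0) = p, γ'(0) = v admits a T > 0 with γ(T) = p and γ'(T) = v. -/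
open Matrix

private lemma constAux {f : ℝ → ℝ} (h : ∀ t, HasDerivAt f 0 t) (t : ℝ) : f t = f 0 :=
  is_const_of_deriv_eq_zero (fun x => (h x).differentiableAt) (fun x => (h x).deriv) t 0

private lemma hasDerivAt_trigA (ω A B t : ℝ) :
    HasDerivAt (fun s => A * Real.cos (ω * s) + B * Real.sin (ω * s))
      (ω * (B * Real.cos (ω * t) - A * Real.sin (ω * t))) t := by
  have hlin : HasDerivAt (fun s : ℝ => ω * s) ω t := by
    simpa using (hasDerivAt_id t).const_mul ω
  have h := ((hlin.cos).const_mul A).add ((hlin.sin).const_mul B)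
  refine h.congr_deriv (Eq.symm ?_)
  ring

private lemma hasDerivAt_trigB (ω A B t : ℝ) :
    HasDerivAt (fun s => B * Real.cos (ω * s) - A * Real.sin (ω * s))
      (-(ω * (A * Real.cos (ω * t) + B * Real.sin (ω * t)))) t := by
  have hlin : HasDerivAt (fun s : ℝ => ω * s) ω t := by
    simpa using (hasDerivAt_id t).const_mul ω
  have h := ((hlin.cos).const_mul B).sub ((hlin.sin).const_mul A)
  refine h.congr_deriv (Eq.symm ?_)
  ring

private lemma hasDerivAt_trigC (ω A B t : ℝ) :
    HasDerivAt (fun s => A * Real.sin (ω * s) - B * Real.cos (ω * s))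
      (ω * (A * Real.cos (ω * t) + B * Real.sin (ω * t))) t := by
  have hlin : HasDerivAt (fun s : ℝ => ω * s) ω t := by
    simpa using (hasDerivAt_id t).const_mul ω
  have h := ((hlin.sin).const_mul A).sub ((hlin.cos).const_mul B)
  refine h.congr_deriv (Eq.symm ?_)
  ring

set_option maxHeartbeats 1000000 in
/-- through every point of `(ℝ³, g^c₃)` there is a 1-parameter
family of closed spacelike geodesics: for every `v₁` with
`q(v₁) := 2c²(1+p₂v₁)² − v₁² ≥ 0`, the vector `v = (1, v₁, √(q(v₁)))` is
`g^c₃`-spacelike at `p`, and every geodesic starting at `p` with initial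
velocity `v` is closed. -/
theorem stmt_7 (c p₀ p₁ p₂ v₁ : ℝ) (hc : 0 < c)
    (hq : 0 ≤ 2 * c^2 * (1 + p₂ * v₁)^2 - v₁^2) :
    (![1, v₁, Real.sqrt (2 * c^2 * (1 + p₂ * v₁)^2 - v₁^2)] ⬝ᵥ
      (Gc3 c p₂).mulVec ![1, v₁, Real.sqrt (2 * c^2 * (1 + p₂ * v₁)^2 - v₁^2)]) > 0 ∧
    ∀ γ₀ γ₁ γ₂ : ℝ → ℝ,
      SolvesGeodesic c γ₀ γ₁ γ₂ →
      (γ₀ 0 = p₀ ∧ γ₁ 0 = p₁ ∧ γ₂ 0 = p₂) →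
      (deriv γ₀ 0 = 1 ∧ deriv γ₁ 0 = v₁ ∧
        deriv γ₂ 0 = Real.sqrt (2 * c^2 * (1 + p₂ * v₁)^2 - v₁^2)) →
      ∃ T > (0 : ℝ),
        γ₀ T = p₀ ∧ γ₁ T = p₁ ∧ γ₂ T = p₂ ∧
        deriv γ₀ T = 1 ∧ deriv γ₁ T = v₁ ∧
        deriv γ₂ T = Real.sqrt (2 * c^2 * (1 + p₂ * v₁)^2 - v₁^2) := by
  obtain ⟨q, hqdef⟩ : ∃ x : ℝ, x = 2 * c^2 * (1 + p₂ * v₁)^2 - v₁^2 := ⟨_, rfl⟩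
  rw [← hqdef] at hq ⊢
  obtain ⟨v₂, hv₂def⟩ : ∃ x : ℝ, x = Real.sqrt q := ⟨_, rfl⟩
  rw [← hv₂def]
  obtain ⟨a, hadef⟩ : ∃ x : ℝ, x = 1 + p₂ * v₁ := ⟨_, rfl⟩
  rw [← hadef] at hqdef
  have hv₂sq : v₂^2 = q := by rw [hv₂def]; exact Real.sq_sqrt hq
  have ha : a ≠ 0 := by
    intro h
    have hq' : q = -v₁^2 := by rw [hqdef, h]; ring
    have hv1 : v₁ = 0 := by nlinarith [hq, hq', sq_nonneg v₁]
    have : a = 1 := by rw [hadef, hv1]; ring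
    rw [h] at this; norm_num at this
  have ha2 : 0 < a^2 := by
    rcases ha.lt_or_gt with h | h <;> nlinarith
  constructor
  · have key : (![1, v₁, v₂] ⬝ᵥ (Gc3 c p₂).mulVec ![1, v₁, v₂]) = c^2 * a^2 := by
      simp [Gc3, Matrix.mulVec, dotProduct, Fin.sum_univ_three]
      linear_combination hv₂sq + hqdef + c^2*(a + 1 + p₂*v₁)*hadef
    rw [key]
    exact mul_pos (pow_pos hc 2) ha2
  · rintro γ₀ γ₁ γ₂ ⟨hd0, hd0', hd1, hd1', hd2, hd2', ode⟩ ⟨hp0, hp1, hp2⟩ ⟨hw0, hw1, hw2⟩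
    obtain ⟨ω, hωdef⟩ : ∃ x : ℝ, x = c^2 * a := ⟨_, rfl⟩
    have hω : ω ≠ 0 := by
      rw [hωdef]; exact mul_ne_zero (pow_ne_zero 2 hc.ne') ha
    -- Step A : conserved quantity
    have hA : ∀ t, deriv γ₀ t + γ₂ t * deriv γ₁ t = a := by
      have h0 : ∀ t, HasDerivAt (fun s => deriv γ₀ s + γ₂ s * deriv γ₁ s) 0 t := by
        intro t
        have h := ((hd0' t).hasDerivAt).add (((hd2 t).hasDerivAt).mul ((hd1' t).hasDerivAt))
        obtain ⟨e0, e1, e2⟩ := ode t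
        refine h.congr_deriv (Eq.symm ?_)
        rw [e0, e1]; ring
      intro t
      have h := constAux h0 t
      rw [h, hw0, hp2, hw1, hadef]
    -- rewritten second-derivatives
    have hu1' : ∀ t, HasDerivAt (deriv γ₁) (ω * deriv γ₂ t) t := by
      intro t
      have h := (hd1' t).hasDerivAt
      obtain ⟨e0, e1, e2⟩ := ode t
      have he : deriv (deriv γ₁) t = ω * deriv γ₂ t := by
        rw [e1, hωdef]
        linear_combination (c^2 * deriv γ₂ t) * (hA t)
      rwa [he] at h
    have hu2' : ∀ t, HasDerivAt (deriv γ₂) (-(ω * deriv γ₁ t)) t := by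
      intro t
      have h := (hd2' t).hasDerivAt
      obtain ⟨e0, e1, e2⟩ := ode t
      have he : deriv (deriv γ₂) t = -(ω * deriv γ₁ t) := by
        rw [e2, hωdef]
        linear_combination (-(c^2 * deriv γ₁ t)) * (hA t)
      rwa [he] at h
    -- Step B : explicit velocities
    have key : ∀ t, deriv γ₁ t = v₁ * Real.cos (ω * t) + v₂ * Real.sin (ω * t) ∧
        deriv γ₂ t = v₂ * Real.cos (ω * t) - v₁ * Real.sin (ω * t) := by
      have h0 : ∀ t, HasDerivAt (fun s =>
          (deriv γ₁ s - (v₁ * Real.cos (ω * s) + v₂ * Real.sin (ω * s))) *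
            (deriv γ₁ s - (v₁ * Real.cos (ω * s) + v₂ * Real.sin (ω * s))) +
          (deriv γ₂ s - (v₂ * Real.cos (ω * s) - v₁ * Real.sin (ω * s))) *
            (deriv γ₂ s - (v₂ * Real.cos (ω * s) - v₁ * Real.sin (ω * s)))) 0 t := by
        intro t
        have h1 := (hu1' t).sub (hasDerivAt_trigA ω v₁ v₂ t)
        have h2 := (hu2' t).sub (hasDerivAt_trigB ω v₁ v₂ t)
        have h := (h1.mul h1).add (h2.mul h2)
        refine h.congr_deriv (Eq.symm ?_)
        simp only [Pi.sub_apply]; ring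
      intro t
      have h := constAux h0 t
      simp only [mul_zero, Real.cos_zero, Real.sin_zero, hw1, hw2, mul_one, add_zero,
        sub_self, zero_mul, zero_add] at h
      have n1 := mul_self_nonneg (deriv γ₁ t - (v₁ * Real.cos (ω * t) + v₂ * Real.sin (ω * t)))
      have n2 := mul_self_nonneg (deriv γ₂ t - (v₂ * Real.cos (ω * t) - v₁ * Real.sin (ω * t)))
      have h1 : deriv γ₁ t - (v₁ * Real.cos (ω * t) + v₂ * Real.sin (ω * t)) = 0 :=
        mul_self_eq_zero.mp (le_antisymm (by linarith) n1)
      have h2 : deriv γ₂ t - (v₂ * Real.cos (ω * t) - v₁ * Real.sin (ω * t)) = 0 :=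
        mul_self_eq_zero.mp (le_antisymm (by linarith) n2)
      exact ⟨by linarith, by linarith⟩
    -- Step C : explicit γ₂
    have hγ₂ : ∀ t, γ₂ t = p₂ - v₁/ω + (v₁ * Real.cos (ω * t) + v₂ * Real.sin (ω * t))/ω := by
      have h0 : ∀ t, HasDerivAt (fun s =>
          γ₂ s - (v₁ * Real.cos (ω * s) + v₂ * Real.sin (ω * s))/ω) 0 t := by
        intro t
        have h := ((hd2 t).hasDerivAt).sub ((hasDerivAt_trigA ω v₁ v₂ t).div_const ω)
        refine h.congr_deriv (Eq.symm ?_)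
        rw [(key t).2]
        field_simp
        ring
      intro t
      have h := constAux h0 t
      simp only [mul_zero, Real.cos_zero, Real.sin_zero, hp2] at h
      norm_num at h
      linarith [h]
    -- Step D : explicit γ₁
    have hγ₁ : ∀ t, γ₁ t = p₁ + v₂/ω + (v₁ * Real.sin (ω * t) - v₂ * Real.cos (ω * t))/ω := by
      have h0 : ∀ t, HasDerivAt (fun s =>
          γ₁ s - (v₁ * Real.sin (ω * s) - v₂ * Real.cos (ω * s))/ω) 0 t := by
        intro t
        have h := ((hd1 t).hasDerivAt).sub ((hasDerivAt_trigC ω v₁ v₂ t).div_const ω)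
        refine h.congr_deriv (Eq.symm ?_)
        rw [(key t).1]
        field_simp
        ring
      intro t
      have h := constAux h0 t
      simp only [mul_zero, Real.cos_zero, Real.sin_zero, hp1] at h
      norm_num at h
      rw [neg_div] at h
      linarith [h]
    -- Step E : explicit γ₀
    have hγ₀ : ∀ t, γ₀ t = p₀ - (p₂ - v₁/ω)*(v₂/ω) +
        (a*t - (p₂ - v₁/ω) * ((v₁ * Real.sin (ω*t) - v₂ * Real.cos (ω*t))/ω) -
          (v₁^2 * (t + Real.sin (ω*t) * Real.cos (ω*t)/ω)/2 +
           v₁*v₂ * (Real.sin (ω*t) * Real.sin (ω*t))/ω +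
           v₂^2 * (t - Real.sin (ω*t) * Real.cos (ω*t)/ω)/2)/ω) := by
      have h0 : ∀ t, HasDerivAt (fun s => γ₀ s -
          (a*s - (p₂ - v₁/ω) * ((v₁ * Real.sin (ω*s) - v₂ * Real.cos (ω*s))/ω) -
            (v₁^2 * (s + Real.sin (ω*s) * Real.cos (ω*s)/ω)/2 +
             v₁*v₂ * (Real.sin (ω*s) * Real.sin (ω*s))/ω +
             v₂^2 * (s - Real.sin (ω*s) * Real.cos (ω*s)/ω)/2)/ω)) 0 t := by
        intro t
        have hlin : HasDerivAt (fun s : ℝ => ω * s) ω t := by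
          simpa using (hasDerivAt_id t).const_mul ω
        have hid : HasDerivAt (fun s : ℝ => s) 1 t := hasDerivAt_id t
        have hsc := (hlin.sin).mul (hlin.cos)
        have hss := (hlin.sin).mul (hlin.sin)
        have hY := ((hasDerivAt_trigC ω v₁ v₂ t).div_const ω).const_mul (p₂ - v₁/ω)
        have hS := ((((hid.add (hsc.div_const ω)).const_mul (v₁^2)).div_const 2).add
                    ((hss.div_const ω).const_mul (v₁*v₂))).add
                   (((hid.sub (hsc.div_const ω)).const_mul (v₂^2)).div_const 2)
        have hF := ((hid.const_mul a).sub hY).sub (hS.div_const ω)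
        have h := ((hd0 t).hasDerivAt).sub hF
        convert h using 1
        · rfl
        · rfl
        · funext s; simp only [Pi.sub_apply, Pi.add_apply, Pi.mul_apply]; ring
        · have hu0 : deriv γ₀ t = a - γ₂ t * deriv γ₁ t := by linarith [hA t]
          rw [hu0, hγ₂ t, (key t).1]
          have hpy := Real.sin_sq_add_cos_sq (ω*t)
          field_simp
          linear_combination (v₁^2 + v₂^2) * hpy
      intro t
      have h := constAux h0 t
      simp only [mul_zero, Real.cos_zero, Real.sin_zero, hp0] at h
      norm_num at h
      linear_combination h
    -- the period
    obtain ⟨T, hT, hωT⟩ : ∃ T > (0:ℝ), ω*T = 2*Real.pi ∨ ω*T = -(2*Real.pi) := by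
      rcases ha.lt_or_gt with h | h
      · have hωneg : ω < 0 := by
          rw [hωdef]; exact mul_neg_of_pos_of_neg (pow_pos hc 2) h
        refine ⟨-(2*Real.pi)/ω, ?_, Or.inr ?_⟩
        · apply div_pos_iff.mpr
          exact Or.inr ⟨by nlinarith [Real.pi_pos], hωneg⟩
        · rw [mul_comm]; exact div_mul_cancel₀ _ hω
      · have hωpos : 0 < ω := by
          rw [hωdef]; exact mul_pos (pow_pos hc 2) h
        refine ⟨(2*Real.pi)/ω, ?_, Or.inl ?_⟩
        · exact div_pos (by nlinarith [Real.pi_pos]) hωpos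
        · rw [mul_comm]; exact div_mul_cancel₀ _ hω
    have hsin : Real.sin (ω*T) = 0 := by
      rcases hωT with h | h <;> rw [h] <;>
        simp [Real.sin_two_pi]
    have hcos : Real.cos (ω*T) = 1 := by
      rcases hωT with h | h <;> rw [h] <;>
        simp [Real.cos_two_pi]
    have hsum : v₁^2 + v₂^2 = 2*ω*a := by
      linear_combination hv₂sq + hqdef - 2*a*hωdef
    refine ⟨T, hT, ?_, ?_, ?_, ?_, ?_, ?_⟩
    · rw [hγ₀ T, hsin, hcos]
      field_simp
      linear_combination (-(ω*T)) * hsum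
    · rw [hγ₁ T, hsin, hcos]
      field_simp
      ring
    · rw [hγ₂ T, hsin, hcos]
      field_simp
      ring
    · have h := hA T
      rw [hγ₂ T, (key T).1, hsin, hcos] at h
      have h2 : p₂ - v₁/ω + (v₁ * 1 + v₂ * 0)/ω = p₂ := by field_simp; ring
      rw [h2] at h
      rw [hadef] at h
      have h3 : (v₁ * 1 + v₂ * 0) = v₁ := by ring
      rw [h3] at h
      linarith [h]
    · rw [(key T).1, hsin, hcos]; ring
    · rw [(key T).2, hsin, hcos]; ring
end
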